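/- Every 3-dicritical oriented graph on at least 10 vertices has at least 21 arcs. -/

import Mathlib

/-!
A 3-dicritical digraph has minimum in- and out-degree at least 2, so on `n ≥ 10` vertices it has
at least `2n ≥ 20` arcs, and exactly 20 only if `n = 10` and every in- and out-degree is 2. This
case is impossible: an oriented graph with maximum in- and out-degree 2 whose proper induced
subdigraphs are all 2-dicolourable is 2-dicolourable. Indeed, for a vertex `z`, colour `V - z`
so that the in-neighbours of `z` receive one colour, and give `z` the other one. Such colourings
come from an induction on `|S|`: to colour `S` giving one colour to two vertices `p, q` that
each have at most one in-neighbour in `S`, colour `S - {p, q}` so that these (at most two)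
in-neighbours agree, then give `p` and `q` the other colour. Finding the colouring of
`S - {p, q}` is the same problem in the reversed digraph, since each of those in-neighbours has
at most one out-neighbour left in `S - {p, q}`.
-/

/-- A digraph (given by its arc relation) is acyclic if no vertex lies on a directed cycle. -/
def DiAcyclic {V : Type*} (D : V → V → Prop) : Prop :=
  ∀ v : V, ¬ Relation.TransGen D v v

/-- The subdigraph induced on a set of vertices is acyclic. -/
def AcyclicOn {V : Type*} (D : V → V → Prop) (S : Set V) : Prop :=
  DiAcyclic (fun a b => a ∈ S ∧ b ∈ S ∧ D a b)

/-- A digraph is `k`-dicolourable if its vertices can be partitioned into `k`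
classes each inducing an acyclic subdigraph. -/
def Dicolourable {V : Type*} (D : V → V → Prop) (k : ℕ) : Prop :=
  ∃ f : V → Fin k, ∀ i : Fin k, AcyclicOn D {v | f v = i}

/-- The dichromatic number. -/
noncomputable def dichi {V : Type*} (D : V → V → Prop) : ℕ :=
  sInf {k | Dicolourable D k}

/-- A digraph is `k`-dicritical if its dichromatic number is `k` and every proper
subdigraph (obtained by deleting vertices and/or arcs) has dichromatic number `< k`. -/
def Dicritical {V : Type*} (D : V → V → Prop) (k : ℕ) : Prop :=
  dichi D = k ∧
    ∀ (S : Set V) (R : V → V → Prop),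
      (∀ a b, R a b → a ∈ S ∧ b ∈ S ∧ D a b) →
      ¬(S = Set.univ ∧ R = D) → dichi R < k

/-- An oriented graph: a digraph with no loops and no digons. -/
def OrientedGraph {V : Type*} (D : V → V → Prop) : Prop :=
  ∀ a b, D a b → ¬ D b a

/-- A tournament: an oriented graph with exactly one arc between any two distinct vertices. -/
def IsTournament {V : Type*} (D : V → V → Prop) : Prop :=
  OrientedGraph D ∧ ∀ a b : V, a ≠ b → D a b ∨ D b a

/-- Out-degree of a vertex. -/
noncomputable def outDeg {V : Type*} (D : V → V → Prop) (v : V) : ℕ :=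
  Nat.card {w | D v w}

/-- In-degree of a vertex. -/
noncomputable def inDeg {V : Type*} (D : V → V → Prop) (v : V) : ℕ :=
  Nat.card {w | D w v}

/-- Number of arcs. -/
noncomputable def numArcs {V : Type*} (D : V → V → Prop) : ℕ :=
  Nat.card {p : V × V | D p.1 p.2}

open Set Function

theorem Set.Subsingleton.exists_fin_two_notMem {s : Set (Fin 2)} (hs : s.Subsingleton) :
    ∃ c, c ∉ s :=
  (ne_univ_iff_exists_notMem s).mp fun h =>
    not_subsingleton (Fin 2) (subsingleton_univ_iff.mp (h ▸ hs))

theorem Set.subsingleton_inter_of_ncard_le_two {α : Type*} [Finite α] {s t : Set α} {a : α}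
    (hs : s.ncard ≤ 2) (ha : a ∈ s) (hat : a ∉ t) : (s ∩ t).Subsingleton := by
  rw [← ncard_le_one_iff_subsingleton]
  calc (s ∩ t).ncard ≤ (s \ {a}).ncard :=
        ncard_le_ncard fun x hx => ⟨hx.1, by rintro rfl; exact hat hx.2⟩
    _ = s.ncard - 1 := ncard_sdiff_singleton_of_mem ha
    _ ≤ 1 := by omega

theorem Set.subsingleton_or_eq_pair_of_ncard_le_two {α : Type*} [Finite α] {s : Set α}
    (hs : s.ncard ≤ 2) : s.Subsingleton ∨ ∃ p q, p ≠ q ∧ s = {p, q} := by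
  rcases hs.lt_or_eq with h | h
  · exact Or.inl (ncard_le_one_iff_subsingleton.mp (by omega))
  · exact Or.inr (ncard_eq_two.mp h)

theorem Finset.eq_of_forall_le_of_sum_le {ι : Type*} [Fintype ι] {f : ι → ℕ} {k : ℕ}
    (hle : ∀ i, k ≤ f i) (hsum : ∑ i, f i ≤ Fintype.card ι * k) (i : ι) : f i = k := by
  have heq : ∑ _ : ι, k = ∑ i, f i :=
    le_antisymm (Finset.sum_le_sum fun i _ => hle i) (by simpa using hsum)
  exact ((Finset.sum_eq_sum_iff_of_le fun i _ => hle i).mp heq i (Finset.mem_univ i)).symm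

section

variable {V : Type*} {D : V → V → Prop}

theorem OrientedGraph.irrefl (hor : OrientedGraph D) (v : V) : ¬ D v v :=
  fun h => hor v v h h

theorem OrientedGraph.flip (hor : OrientedGraph D) : OrientedGraph (flip D) :=
  fun a b hab hba => hor b a hab hba

theorem numArcs_eq_sum_outDeg [Fintype V] (D : V → V → Prop) :
    numArcs D = ∑ v, outDeg D v :=
  (Nat.card_congr (Equiv.subtypeProdEquivSigmaSubtype fun a b => D a b)).trans Nat.card_sigma

theorem numArcs_eq_sum_inDeg [Fintype V] (D : V → V → Prop) :
    numArcs D = ∑ v, inDeg D v :=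
  (Nat.card_congr (Equiv.subtypeEquiv (Equiv.prodComm V V) fun _ => Iff.rfl)).trans
    (numArcs_eq_sum_outDeg (flip D))

theorem AcyclicOn.mono {S T : Set V} (hT : AcyclicOn D T) (hST : S ⊆ T) : AcyclicOn D S :=
  fun v hv => hT v (Relation.TransGen.mono (fun _ _ h => ⟨hST h.1, hST h.2.1, h.2.2⟩) _ _ hv)

theorem acyclicOn_flip {S : Set V} : AcyclicOn (flip D) S ↔ AcyclicOn D S := by
  have hswap : (fun a b => a ∈ S ∧ b ∈ S ∧ flip D a b) =
      swap (fun a b => a ∈ S ∧ b ∈ S ∧ D a b) := by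
    ext a b
    simp only [flip, swap]
    tauto
  unfold AcyclicOn DiAcyclic
  rw [hswap]
  exact forall_congr' fun v => not_congr Relation.transGen_swap

theorem AcyclicOn.insert_of_forall_not_adj {T : Set V} {v : V} (hT : AcyclicOn D T)
    (hv : ∀ u ∈ insert v T, ¬ D u v) : AcyclicOn D (insert v T) := by
  have step : ∀ a b, a ∈ insert v T → b ∈ insert v T → D a b → b ∈ T := fun a b ha hb hab =>
    hb.resolve_left (by rintro rfl; exact hv a ha hab)
  have lift : ∀ {a b}, a ∈ T →
      Relation.TransGen (fun a b => a ∈ insert v T ∧ b ∈ insert v T ∧ D a b) a b →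
      Relation.TransGen (fun a b => a ∈ T ∧ b ∈ T ∧ D a b) a b ∧ b ∈ T := by
    intro a b ha hab
    induction hab with
    | single h =>
      have hb := step _ _ h.1 h.2.1 h.2.2
      exact ⟨.single ⟨ha, hb, h.2.2⟩, hb⟩
    | tail _ h ih =>
      have hc := step _ _ h.1 h.2.1 h.2.2
      exact ⟨ih.1.tail ⟨ih.2, hc, h.2.2⟩, hc⟩
  intro u hu
  obtain ⟨w, -, hw⟩ := Relation.TransGen.tail'_iff.mp hu
  exact hT u (lift (step _ _ hw.1 hw.2.1 hw.2.2) hu).1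

theorem Dicolourable.mono {j k : ℕ} (h : Dicolourable D j) (hjk : j ≤ k) : Dicolourable D k := by
  obtain ⟨f, hf⟩ := h
  refine ⟨Fin.castLE hjk ∘ f, fun i v hv => ?_⟩
  obtain ⟨w, ⟨hvi, -⟩, -⟩ := Relation.TransGen.head'_iff.mp hv
  refine (hf (f v)).mono (fun u hu => Fin.castLE_injective hjk ?_) v hv
  exact hu.trans hvi.symm

theorem dicolourable_natCard [Finite V] (hirr : ∀ v, ¬ D v v) : Dicolourable D (Nat.card V) := by
  refine ⟨Finite.equivFin V, fun i v hv => ?_⟩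
  obtain ⟨w, ⟨hvi, hwi, hvw⟩, -⟩ := Relation.TransGen.head'_iff.mp hv
  obtain rfl : v = w := (Finite.equivFin V).injective (hvi.trans hwi.symm)
  exact hirr v hvw

theorem dicolourable_of_dichi_le [Finite V] (hirr : ∀ v, ¬ D v v) {k : ℕ} (hk : dichi D ≤ k) :
    Dicolourable D k :=
  Dicolourable.mono (Nat.sInf_mem (s := {k | Dicolourable D k}) ⟨_, dicolourable_natCard hirr⟩)
    hk

theorem Dicritical.not_dicolourable {k : ℕ} (hcrit : Dicritical D (k + 1)) :
    ¬ Dicolourable D k := fun h => by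
  have : dichi D ≤ k := Nat.sInf_le (s := {k | Dicolourable D k}) h
  rw [hcrit.1] at this
  omega

def IsDicolouringOn (D : V → V → Prop) (S : Set V) (f : V → Fin 2) : Prop :=
  ∀ i, AcyclicOn D {v ∈ S | f v = i}

theorem isDicolouringOn_flip {S : Set V} {f : V → Fin 2} :
    IsDicolouringOn (flip D) S f ↔ IsDicolouringOn D S f :=
  forall_congr' fun _ => acyclicOn_flip

theorem dicolourable_two_iff : Dicolourable D 2 ↔ ∃ f, IsDicolouringOn D univ f := by
  simp only [Dicolourable, IsDicolouringOn, mem_univ, true_and]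

theorem IsDicolouringOn.insert_update [DecidableEq V] {S : Set V} {g : V → Fin 2} {v : V}
    {c : Fin 2} (hg : IsDicolouringOn D S g) (hvS : v ∉ S) (hvv : ¬ D v v)
    (hc : ∀ u ∈ S, D u v → g u ≠ c) : IsDicolouringOn D (insert v S) (update g v c) := by
  intro i
  by_cases hi : c = i
  · subst hi
    have hclass : {x ∈ insert v S | update g v c x = c} = insert v {x ∈ S | g x = c} := by
      ext x
      by_cases hx : x = v <;> simp [hx]
    rw [hclass]
    refine (hg c).insert_of_forall_not_adj ?_
    rintro u (rfl | ⟨hu, hgu⟩) huv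
    · exact hvv huv
    · exact hc u hu huv hgu
  · have hclass : {x ∈ insert v S | update g v c x = i} = {x ∈ S | g x = i} := by
      ext x
      by_cases hx : x = v <;> simp [hx, hvS, hi]
    rw [hclass]
    exact hg i

theorem IsDicolouringOn.exists_univ_of_compl_singleton (hor : OrientedGraph D) {z : V}
    {g : V → Fin 2} (hg : IsDicolouringOn D {z}ᶜ g) (hN : (g '' {u | D u z}).Subsingleton) :
    ∃ f, IsDicolouringOn D univ f := by
  classical
  obtain ⟨c, hc⟩ := hN.exists_fin_two_notMem
  refine ⟨update g z c, ?_⟩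
  have hf := hg.insert_update (notMem_compl_iff.mpr rfl) (hor.irrefl z)
    fun u _ huz hgu => hc ⟨u, huz, hgu⟩
  rwa [insert_eq, union_compl_self] at hf

theorem IsDicolouringOn.exists_extend_pair (hor : OrientedGraph D) {S : Set V} {p q : V}
    {g : V → Fin 2} {c : Fin 2} (hg : IsDicolouringOn D ((S \ {p}) \ {q}) g) (hp : p ∈ S)
    (hq : q ∈ S) (hpq : p ≠ q) (hc : ∀ u ∈ (S \ {p}) \ {q}, D u p ∨ D u q → g u ≠ c) :
    ∃ f, IsDicolouringOn D S f ∧ f p = c ∧ f q = c := by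
  classical
  wlog hqp : ¬ D q p generalizing p q
  · rw [sdiff_sdiff_comm] at hg hc
    obtain ⟨f, hf, hfq, hfp⟩ := this hg hq hp hpq.symm
      (fun u hu huqp => hc u hu huqp.symm) (hor q p (not_not.mp hqp))
    exact ⟨f, hf, hfp, hfq⟩
  have hSq : insert q ((S \ {p}) \ {q}) = S \ {p} :=
    insert_sdiff_self_of_mem ⟨hq, hpq.symm⟩
  have hg' := hg.insert_update (c := c) (by simp) (hor.irrefl q)
    fun u hu huq => hc u hu (Or.inr huq)
  rw [hSq] at hg'
  have hf := hg'.insert_update (c := c) (by simp) (hor.irrefl p) fun u hu hup => by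
    rcases eq_or_ne u q with rfl | huq
    · exact absurd hup hqp
    · rw [update_of_ne huq]
      exact hc u ⟨hu, huq⟩ (Or.inl hup)
  rw [insert_sdiff_self_of_mem hp] at hf
  exact ⟨_, hf, update_self .., by rw [update_of_ne hpq.symm, update_self]⟩

theorem Dicritical.exists_dicolouringOn [Finite V] (hor : OrientedGraph D)
    (hcrit : Dicritical D 3) {S : Set V} (hS : S ≠ univ) : ∃ f, IsDicolouringOn D S f := by
  obtain ⟨f, hf⟩ := dicolourable_of_dichi_le (fun v h => hor.irrefl v h.2.2)
    (Nat.le_of_lt_succ (hcrit.2 S _ (fun _ _ h => h) fun h => hS h.1))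
  refine ⟨f, fun i => ?_⟩
  have hrel : (fun a b => a ∈ {v ∈ S | f v = i} ∧ b ∈ {v ∈ S | f v = i} ∧ D a b) =
      fun a b => a ∈ {v | f v = i} ∧ b ∈ {v | f v = i} ∧ a ∈ S ∧ b ∈ S ∧ D a b := by
    ext a b
    simp only [mem_ofPred_eq]
    tauto
  unfold AcyclicOn
  rw [hrel]
  exact hf i

theorem two_le_inDeg [Finite V] (hor : OrientedGraph D)
    (hcol : ∀ S : Set V, S ≠ univ → ∃ f, IsDicolouringOn D S f)
    (hnot : ∀ f, ¬ IsDicolouringOn D univ f) (v : V) : 2 ≤ inDeg D v := by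
  by_contra! hv
  obtain ⟨g, hg⟩ := hcol {v}ᶜ (compl_ne_univ.mpr (singleton_nonempty v))
  have hN : {u | D u v}.Subsingleton := ncard_le_one_iff_subsingleton.mp (by
    rw [← Nat.card_coe_set_eq]; exact Nat.le_of_lt_succ hv)
  obtain ⟨f, hf⟩ := hg.exists_univ_of_compl_singleton hor (hN.image g)
  exact hnot f hf

theorem two_le_outDeg [Finite V] (hor : OrientedGraph D)
    (hcol : ∀ S : Set V, S ≠ univ → ∃ f, IsDicolouringOn D S f)
    (hnot : ∀ f, ¬ IsDicolouringOn D univ f) (v : V) : 2 ≤ outDeg D v :=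
  two_le_inDeg (D := flip D) hor.flip
    (fun T hT => (hcol T hT).imp fun _ => isDicolouringOn_flip.mpr)
    (fun f hf => hnot f (isDicolouringOn_flip.mp hf)) v

section MaxDegreeTwo

variable [Finite V] (hor : OrientedGraph D) (hin : ∀ v, inDeg D v ≤ 2)
  (hout : ∀ v, outDeg D v ≤ 2) (hcol : ∀ S : Set V, S ≠ univ → ∃ f, IsDicolouringOn D S f)
include hor hin hout hcol

theorem exists_dicolouringOn_image_subsingleton {S N : Set V} (hS : S ≠ univ) (hNS : N ⊆ S)
    (hN : N.ncard ≤ 2) (hNin : ∀ t ∈ N, ({u | D u t} ∩ S).Subsingleton) :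
    ∃ g, IsDicolouringOn D S g ∧ (g '' N).Subsingleton := by
  induction hn : S.ncard using Nat.strong_induction_on generalizing D S N with
  | _ n ih =>
  obtain hN1 | ⟨p, q, hpq, rfl⟩ := subsingleton_or_eq_pair_of_ncard_le_two hN
  · obtain ⟨g, hg⟩ := hcol S hS
    exact ⟨g, hg, hN1.image g⟩
  have hp : p ∈ S := hNS (by simp)
  have hq : q ∈ S := hNS (by simp)
  set S' := (S \ {p}) \ {q}
  set N' := ({u | D u p} ∪ {u | D u q}) ∩ S'
  have hS'S : S' ⊆ S := fun x hx => hx.1.1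
  have hS'n : S'.ncard < n := hn ▸ ncard_lt_ncard ⟨hS'S, fun h => (h hp).1.2 rfl⟩
  have hS' : S' ≠ univ := fun h => (h ▸ mem_univ p : p ∈ S').1.2 rfl
  have hN' : N'.ncard ≤ 2 :=
    calc N'.ncard ≤ ({u | D u p} ∩ S ∪ {u | D u q} ∩ S).ncard :=
          ncard_le_ncard fun u ⟨hu, huS⟩ => hu.imp (⟨·, hS'S huS⟩) (⟨·, hS'S huS⟩)
      _ ≤ 1 + 1 := (ncard_union_le _ _).trans (add_le_add
          (ncard_le_one_iff_subsingleton.mpr (hNin p (by simp)))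
          (ncard_le_one_iff_subsingleton.mpr (hNin q (by simp))))
  have hN'out : ∀ t ∈ N', ({u | D t u} ∩ S').Subsingleton := by
    rintro t ⟨htp | htq, -⟩
    · exact subsingleton_inter_of_ncard_le_two (hout t) htp fun h => h.1.2 rfl
    · exact subsingleton_inter_of_ncard_le_two (hout t) htq fun h => h.2 rfl
  obtain ⟨g, hg, hgN'⟩ := ih _ hS'n hor.flip hout hin
    (fun T hT => (hcol T hT).imp fun _ => isDicolouringOn_flip.mpr) hS' inter_subset_right hN'
    hN'out rfl
  obtain ⟨c, hc⟩ := hgN'.exists_fin_two_notMem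
  obtain ⟨f, hf, hfp, hfq⟩ := (isDicolouringOn_flip.mp hg).exists_extend_pair hor hp hq hpq
    fun u hu hupq hgu => hc ⟨u, ⟨hupq, hu⟩, hgu⟩
  refine ⟨f, hf, ?_⟩
  rw [image_pair, hfp, hfq, pair_eq_singleton]
  exact subsingleton_singleton

theorem exists_dicolouringOn_univ_of_degree_le_two [Nonempty V] :
    ∃ f, IsDicolouringOn D univ f := by
  obtain ⟨z⟩ := ‹Nonempty V›
  obtain ⟨g, hg, hgN⟩ := exists_dicolouringOn_image_subsingleton hor.flip hout hin
    (fun T hT => (hcol T hT).imp fun _ => isDicolouringOn_flip.mpr) (S := {z}ᶜ)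
    (N := {u | D u z}) (compl_ne_univ.mpr (singleton_nonempty z))
    (fun u huz hu => hor.irrefl z (hu ▸ huz)) (hin z)
    fun t ht => subsingleton_inter_of_ncard_le_two (hout t) ht (notMem_compl_iff.mpr rfl)
  exact (isDicolouringOn_flip.mp hg).exists_univ_of_compl_singleton hor hgN

end MaxDegreeTwo

end

/-- Every 3-dicritical oriented graph on at least 10 vertices has at least 21 arcs. -/
theorem three_dicritical_arc_bound {V : Type*} [Fintype V] (D : V → V → Prop)
    (hor : OrientedGraph D) (hcrit : Dicritical D 3)
    (hn : 10 ≤ Fintype.card V) : 21 ≤ numArcs D := by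
  have hcol : ∀ S : Set V, S ≠ univ → ∃ f, IsDicolouringOn D S f :=
    fun _ => hcrit.exists_dicolouringOn hor
  have hnot : ∀ f, ¬ IsDicolouringOn D univ f :=
    fun f hf => hcrit.not_dicolourable (dicolourable_two_iff.mpr ⟨f, hf⟩)
  by_contra! hlt
  have hin : ∀ v, inDeg D v = 2 := Finset.eq_of_forall_le_of_sum_le
    (two_le_inDeg hor hcol hnot) (by rw [← numArcs_eq_sum_inDeg]; omega)
  have hout : ∀ v, outDeg D v = 2 := Finset.eq_of_forall_le_of_sum_le
    (two_le_outDeg hor hcol hnot) (by rw [← numArcs_eq_sum_outDeg]; omega)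
  have : Nonempty V := Fintype.card_pos_iff.mp (by omega)
  obtain ⟨f, hf⟩ := exists_dicolouringOn_univ_of_degree_le_two hor (fun v => (hin v).le)
    (fun v => (hout v).le) hcol
  exact hnot f hf
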